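/- Let μ^N be an exchangeable probability measure on (ℝ^d)^N and ν a probability measure on ℝ^d, and let η ∈ (0,1]. For 1 ≤ k ≤ N, let μ^{[k],N} denote the marginal of μ^N on the first k coordinates. Then W̃_η(μ^{[k],N}, ν^{⊗k}) ≤ (k/N) W̃_η(μ^N, ν^{⊗N}), where W̃_η is the optimal transport cost with cost ‖x−y‖_{1,η} = Σ_i |x^i − y^i|^η. -/

import Mathlib

/-!
For `j : Fin N` let `φ j` send `x ∈ (ℝ^d)^N` to the cyclic window `(x_j, …, x_{j+k-1})`, indices
mod `N`. By exchangeability `φ j` pushes `μ^N` to `μ^{[k],N}`, and it pushes `ν^{⊗N}` to `ν^{⊗k}`.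
Hence for any coupling `π` of `μ^N` and `ν^{⊗N}`, the average over `j` of the images of `π` under
`φ j × φ j` is a coupling of `μ^{[k],N}` and `ν^{⊗k}`; since every coordinate lies in exactly `k`
of the `N` windows, its cost is `k/N` times the cost of `π`.
-/

open MeasureTheory
open scoped ENNReal

/-- The optimal transport cost between `μ` and `ν` for the cost function `c`. -/
noncomputable def transportCost {E : Type*} [MeasurableSpace E]
    (c : E → E → ℝ) (μ ν : Measure E) : ℝ :=
  sInf ((fun π : Measure (E × E) => ∫ p, c p.1 p.2 ∂π) ''
    {π | π.map Prod.fst = μ ∧ π.map Prod.snd = ν})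

theorem Fintype.sum_sum_add_right {ι G M : Type*} [Fintype ι] [AddGroup G] [Fintype G]
    [AddCommMonoid M] (a : ι → G) (g : G → M) :
    ∑ j, ∑ i, g (a i + j) = Fintype.card ι • ∑ m, g m := by
  rw [Finset.sum_comm, Finset.sum_congr rfl fun i _ =>
    Fintype.sum_equiv (Equiv.addLeft (a i)) (fun j => g (a i + j)) g fun _ => rfl]
  simp

theorem norm_sub_rpow_le_add {V : Type*} [SeminormedAddGroup V] {η : ℝ} (hη0 : 0 ≤ η)
    (hη1 : η ≤ 1) (a b : V) : ‖a - b‖ ^ η ≤ ‖a‖ ^ η + ‖b‖ ^ η :=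
  calc ‖a - b‖ ^ η ≤ (‖a‖ + ‖b‖) ^ η :=
        Real.rpow_le_rpow (norm_nonneg _) (norm_sub_le a b) hη0
    _ ≤ ‖a‖ ^ η + ‖b‖ ^ η := Real.rpow_add_le_add_rpow (norm_nonneg _) (norm_nonneg _) hη0 hη1

namespace MeasureTheory

variable {E F : Type*} [MeasurableSpace E] [MeasurableSpace F]

theorem Measure.pi_map_comp_of_injective {ι κ : Type*} [Fintype ι] [Fintype κ]
    (ν : Measure E) [IsProbabilityMeasure ν] {f : ι → κ} (hf : f.Injective) :
    (Measure.pi fun _ : κ => ν).map (fun x => x ∘ f) = Measure.pi fun _ : ι => ν := by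
  classical
  refine (Measure.pi_eq fun s hs => ?_).symm
  set t : κ → Set E := Function.extend f s fun _ => Set.univ
  have hpre : (fun x : κ → E => x ∘ f) ⁻¹' Set.univ.pi s = Set.univ.pi t := by
    ext x
    simp only [Set.mem_preimage, Set.mem_univ_pi, Function.comp_apply]
    refine ⟨fun h j => ?_, fun h i => by simpa [t, hf.extend_apply] using h (f i)⟩
    by_cases hj : ∃ i, f i = j
    · obtain ⟨i, rfl⟩ := hj
      simpa [t, hf.extend_apply] using h i
    · simp [t, Function.extend_apply' _ _ _ hj]
  have hone : ∀ j ∉ Finset.univ.image f, ν (t j) = 1 := fun j hj => by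
    simp only [Finset.mem_image, Finset.mem_univ, true_and] at hj
    simp [t, Function.extend_apply' _ _ _ hj]
  rw [Measure.map_apply (by fun_prop) (.univ_pi hs), hpre, Measure.pi_pi,
    ← Finset.prod_subset (Finset.subset_univ _) fun j _ hj => hone j hj,
    Finset.prod_image fun i _ i' _ h => hf h]
  simp [t, hf.extend_apply]

def Measure.Exchangeable {ι : Type*} (μ : Measure (ι → E)) : Prop :=
  ∀ σ : Equiv.Perm ι, μ.map (fun x => x ∘ σ) = μ

theorem Measure.Exchangeable.map_comp_eq {ι κ : Type*} [Finite κ]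
    {μ : Measure (ι → E)} (hμ : μ.Exchangeable) {f g : κ → ι} (hf : f.Injective)
    (hg : g.Injective) : μ.map (fun x => x ∘ f) = μ.map (fun x => x ∘ g) := by
  obtain ⟨σ, hσ⟩ := Equiv.Perm.exists_extending_pair g f hg hf
  have hcomp : (fun x : ι → E => x ∘ f) = (fun x => x ∘ g) ∘ fun x => x ∘ σ := by
    funext x i
    simp [hσ]
  rw [hcomp, ← Measure.map_map (by fun_prop) (by fun_prop), hμ σ]

def IsCoupling (π : Measure (E × F)) (μ : Measure E) (ν : Measure F) : Prop :=
  π.map Prod.fst = μ ∧ π.map Prod.snd = ν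

theorem isCoupling_prod (μ : Measure E) (ν : Measure F) [IsProbabilityMeasure μ]
    [IsProbabilityMeasure ν] : IsCoupling (μ.prod ν) μ ν := by
  simp [IsCoupling, Measure.map_fst_prod, Measure.map_snd_prod]

theorem IsCoupling.map {E' F' : Type*} [MeasurableSpace E'] [MeasurableSpace F']
    {π : Measure (E × F)} {μ : Measure E} {ν : Measure F} (hπ : IsCoupling π μ ν)
    {φ : E → E'} {ψ : F → F'} (hφ : Measurable φ) (hψ : Measurable ψ) :
    IsCoupling (π.map (Prod.map φ ψ)) (μ.map φ) (ν.map ψ) := by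
  rw [IsCoupling, Measure.map_map measurable_fst (hφ.prodMap hψ),
    Measure.map_map measurable_snd (hφ.prodMap hψ), ← hπ.1, ← hπ.2,
    Measure.map_map hφ measurable_fst, Measure.map_map hψ measurable_snd]
  exact ⟨rfl, rfl⟩

theorem Measure.map_inv_card_smul_sum {ι : Type*} [Fintype ι] [Nonempty ι]
    {m : ι → Measure E} {μ : Measure F} {f : E → F} (hf : Measurable f)
    (hm : ∀ j, (m j).map f = μ) :
    ((Fintype.card ι : ℝ≥0∞)⁻¹ • ∑ j, m j).map f = μ := by
  rw [Measure.map_smul, Measure.map_finset_sum' hf.aemeasurable,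
    Finset.sum_congr rfl fun j _ => hm j, Finset.sum_const, Finset.card_univ,
    ← Nat.cast_smul_eq_nsmul ℝ≥0∞, smul_smul,
    ENNReal.inv_mul_cancel (by simp) (ENNReal.natCast_ne_top _), one_smul]

theorem IsCoupling.inv_card_smul_sum {ι : Type*} [Fintype ι] [Nonempty ι]
    {π : ι → Measure (E × F)} {μ : Measure E} {ν : Measure F}
    (hπ : ∀ j, IsCoupling (π j) μ ν) :
    IsCoupling ((Fintype.card ι : ℝ≥0∞)⁻¹ • ∑ j, π j) μ ν :=
  ⟨Measure.map_inv_card_smul_sum measurable_fst fun j => (hπ j).1,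
    Measure.map_inv_card_smul_sum measurable_snd fun j => (hπ j).2⟩

theorem IsCoupling.integrable_of_norm_le_add {π : Measure (E × F)} {μ : Measure E}
    {ν : Measure F} (hπ : IsCoupling π μ ν) {c : E × F → ℝ} {g : E → ℝ} {h : F → ℝ}
    (hc : AEStronglyMeasurable c π) (hg : Integrable g μ) (hh : Integrable h ν)
    (hle : ∀ p, ‖c p‖ ≤ g p.1 + h p.2) : Integrable c π := by
  rw [← hπ.1] at hg
  rw [← hπ.2] at hh
  exact ((hg.comp_measurable measurable_fst).add (hh.comp_measurable measurable_snd)).mono' hc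
    (.of_forall hle)

theorem transportCost_le_integral {c : E → E → ℝ} (hc : ∀ x y, 0 ≤ c x y)
    {μ ν : Measure E} {π : Measure (E × E)} (hπ : IsCoupling π μ ν) :
    transportCost c μ ν ≤ ∫ p, c p.1 p.2 ∂π :=
  csInf_le ⟨0, by rintro _ ⟨π, -, rfl⟩; exact integral_nonneg fun p => hc p.1 p.2⟩ ⟨π, hπ, rfl⟩

theorem le_mul_transportCost {c : E → E → ℝ} {μ ν : Measure E} {a t : ℝ} (ha : 0 ≤ a)
    (hne : ∃ π, IsCoupling π μ ν) (h : ∀ π, IsCoupling π μ ν → t ≤ a * ∫ p, c p.1 p.2 ∂π) :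
    t ≤ a * transportCost c μ ν := by
  rw [transportCost, ← smul_eq_mul, ← Real.sInf_smul_of_nonneg ha]
  refine le_csInf ((Set.Nonempty.image _ hne).smul_set) ?_
  rintro _ ⟨_, ⟨π, hπ, rfl⟩, rfl⟩
  exact h π hπ

/-- The average over `j` of the images of a coupling of `μ, ν` under `φ j × φ j` is a coupling of
`μ', ν'`. -/
theorem transportCost_le_div_card_mul {ι : Type*} [Fintype ι] [Nonempty ι]
    {c : E → E → ℝ} {c' : F → F → ℝ} (hc' : ∀ x y, 0 ≤ c' x y)
    (hc'm : Measurable fun p : F × F => c' p.1 p.2) {μ ν : Measure E} {μ' ν' : Measure F}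
    (hne : ∃ π, IsCoupling π μ ν)
    (hint : ∀ π, IsCoupling π μ ν → Integrable (fun p => c p.1 p.2) π)
    {φ : ι → E → F} (hφ : ∀ j, Measurable (φ j))
    (hμ : ∀ j, μ.map (φ j) = μ') (hν : ∀ j, ν.map (φ j) = ν')
    {a : ℝ} (ha : 0 ≤ a) (hsum : ∀ x y, ∑ j, c' (φ j x) (φ j y) = a * c x y) :
    transportCost c' μ' ν' ≤ a / Fintype.card ι * transportCost c μ ν := by
  refine le_mul_transportCost (by positivity) hne fun π hπ => ?_
  have hπj : ∀ j, IsCoupling (π.map (Prod.map (φ j) (φ j))) μ' ν' := fun j => by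
    simpa only [hμ j, hν j] using hπ.map (hφ j) (hφ j)
  have hterm : ∀ j, Integrable (fun p => c' (φ j p.1) (φ j p.2)) π := fun j =>
    ((hint π hπ).const_mul a).mono' ((hc'm.comp ((hφ j).prodMap (hφ j))).aestronglyMeasurable)
      (.of_forall fun p => by
        rw [Real.norm_of_nonneg (hc' _ _), ← hsum]
        exact Finset.single_le_sum (f := fun j => c' (φ j p.1) (φ j p.2)) (fun j _ => hc' _ _)
          (Finset.mem_univ j))
  calc transportCost c' μ' ν'
      ≤ ∫ p, c' p.1 p.2 ∂((Fintype.card ι : ℝ≥0∞)⁻¹ • ∑ j, π.map (Prod.map (φ j) (φ j))) :=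
        transportCost_le_integral hc' (IsCoupling.inv_card_smul_sum hπj)
    _ = (Fintype.card ι : ℝ)⁻¹ * ∑ j, ∫ p, c' (φ j p.1) (φ j p.2) ∂π := by
        rw [integral_smul_measure, integral_finsetSum_measure fun j _ =>
          (integrable_map_measure hc'm.aestronglyMeasurable
            ((hφ j).prodMap (hφ j)).aemeasurable).2 (hterm j)]
        simp only [ENNReal.toReal_inv, ENNReal.toReal_natCast, smul_eq_mul]
        congr 1
        exact Finset.sum_congr rfl fun j _ =>
          integral_map ((hφ j).prodMap (hφ j)).aemeasurable hc'm.aestronglyMeasurable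
    _ = a / Fintype.card ι * ∫ p, c p.1 p.2 ∂π := by
        rw [← integral_finsetSum _ fun j _ => hterm j]
        simp only [hsum, integral_const_mul]
        ring

end MeasureTheory

theorem stmt_12_general (d N : ℕ) (hN : 1 ≤ N) (η : ℝ) (hη : η ∈ Set.Ioc (0 : ℝ) 1)
    (μN : Measure (Fin N → EuclideanSpace ℝ (Fin d))) [IsProbabilityMeasure μN]
    (hexch : ∀ σ : Equiv.Perm (Fin N),
      μN.map (fun x => x ∘ σ) = μN)
    (hμmom : Integrable (fun x => ∑ i, ‖x i‖ ^ η) μN)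
    (ν : Measure (EuclideanSpace ℝ (Fin d))) [IsProbabilityMeasure ν]
    (hνmom : Integrable (fun y => ‖y‖ ^ η) ν)
    (k : ℕ) (hk : k ≤ N) :
    transportCost (fun x y => ∑ i, ‖x i - y i‖ ^ η)
        (μN.map (fun x (i : Fin k) => x (Fin.castLE hk i)))
        (Measure.pi fun _ : Fin k => ν) ≤
      (k : ℝ) / N *
        transportCost (fun x y => ∑ i, ‖x i - y i‖ ^ η) μN
          (Measure.pi fun _ : Fin N => ν) := by
  obtain ⟨hη0, hη1⟩ := hη
  have : NeZero N := ⟨by omega⟩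
  have hwindow (j : Fin N) : (fun i : Fin k => Fin.castLE hk i + j).Injective :=
    (add_left_injective j).comp (Fin.castLE_injective hk)
  have hνmom' : Integrable (fun y => ∑ i, ‖y i‖ ^ η) (Measure.pi fun _ : Fin N => ν) :=
    integrable_finsetSum _ fun i _ =>
      (measurePreserving_eval (fun _ => ν) i).integrable_comp_of_integrable hνmom
  have hcost_le (x y : Fin N → EuclideanSpace ℝ (Fin d)) :
      ‖∑ i, ‖x i - y i‖ ^ η‖ ≤ ∑ i, ‖x i‖ ^ η + ∑ i, ‖y i‖ ^ η := by
    rw [Real.norm_of_nonneg (by positivity), ← Finset.sum_add_distrib]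
    exact Finset.sum_le_sum fun i _ => norm_sub_rpow_le_add hη0.le hη1 _ _
  rw [show (N : ℝ) = Fintype.card (Fin N) by simp]
  refine transportCost_le_div_card_mul (φ := fun j x i => x (Fin.castLE hk i + j))
    (fun x y => by positivity) (by fun_prop) ⟨_, isCoupling_prod _ _⟩
    (fun π hπ => hπ.integrable_of_norm_le_add (Measurable.aestronglyMeasurable (by fun_prop))
      hμmom hνmom' fun p => hcost_le p.1 p.2)
    (fun j => by fun_prop)
    (fun j => Measure.Exchangeable.map_comp_eq hexch (hwindow j) (Fin.castLE_injective hk))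
    (fun j => Measure.pi_map_comp_of_injective ν (hwindow j)) (Nat.cast_nonneg k)
    (fun x y => ?_)
  rw [Fintype.sum_sum_add_right (Fin.castLE hk) fun m => ‖x m - y m‖ ^ η, nsmul_eq_mul,
    Fintype.card_fin]

/-- For an exchangeable probability measure `μ^N` on `(ℝ^d)^N`, a probability
measure `ν` on `ℝ^d`, `η ∈ (0,1]` and `1 ≤ k ≤ N`, the marginal `μ^{[k],N}` on
the first `k` coordinates satisfies
`W̃_η(μ^{[k],N}, ν^{⊗k}) ≤ (k/N) W̃_η(μ^N, ν^{⊗N})`, where `W̃_η` is the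
transport cost for `‖x−y‖_{1,η} = ∑ᵢ |xⁱ − yⁱ|^η`. -/
theorem stmt_12 (d N : ℕ) (hN : 1 ≤ N) (η : ℝ) (hη : η ∈ Set.Ioc (0 : ℝ) 1)
    (μN : Measure (Fin N → EuclideanSpace ℝ (Fin d))) [IsProbabilityMeasure μN]
    (hexch : ∀ σ : Equiv.Perm (Fin N),
      μN.map (fun x => x ∘ σ) = μN)
    (hμmom : Integrable (fun x => ∑ i, ‖x i‖ ^ η) μN)
    (ν : Measure (EuclideanSpace ℝ (Fin d))) [IsProbabilityMeasure ν]
    (hνmom : Integrable (fun y => ‖y‖ ^ η) ν)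
    (k : ℕ) (hk1 : 1 ≤ k) (hk : k ≤ N) :
    transportCost (fun x y => ∑ i, ‖x i - y i‖ ^ η)
        (μN.map (fun x (i : Fin k) => x (Fin.castLE hk i)))
        (Measure.pi fun _ : Fin k => ν) ≤
      (k : ℝ) / N *
        transportCost (fun x y => ∑ i, ‖x i - y i‖ ^ η) μN
          (Measure.pi fun _ : Fin N => ν) :=
  stmt_12_general d N hN η hη μN hexch hμmom ν hνmom k hk
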